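/- arXiv:0804.2191 — 2 statements merged into one kernel-verified Lean document; each statement's English description precedes it below -/
import Mathlib

section
/- Let s, q ∈ ℝ² and R > 0 with R < ‖q − s‖ ≤ √3·R, and let ρ denote the rotation by angle π/3 about s. Then for every point x with ‖x − s‖ = R, at least one of the six points ρ^k(q), k = 0, 1, …, 5, satisfies ‖x − ρ^k(q)‖ ≤ R. (Six sensors located in the circular crown between radii R and √3 R around s, placed symmetrically under rotations by π/3 about s, jointly cover every point of the sensing circle of s at least once.) -/
/-!
Write `u = x - s` (so `‖u‖ = R`) and `v = q - s`. Since
`‖u - rot θ v‖² = ‖u‖² + ‖v‖² - 2⟪u, rot θ v⟫`, the point `ρ^k q` covers `x` exactly when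
`⟪u, rot (kπ/3) v⟫ ≥ ‖v‖² / 2`. The six directions `rot (kπ/3) v` cut the plane into sectors
of angle `π/3`, so one of them makes an angle at most `π/6` with `u`, whence
`⟪u, rot (kπ/3) v⟫ ≥ cos (π/6) ‖u‖ ‖v‖ = (√3/2) R ‖v‖`, and this is at least `‖v‖² / 2`
precisely because `‖v‖ ≤ √3 R`.
-/

/-- The point (a, b) of the Euclidean plane. -/
noncomputable def pt (a b : ℝ) : EuclideanSpace ℝ (Fin 2) :=
  (WithLp.equiv 2 (Fin 2 → ℝ)).symm ![a, b]

/-- Rotation of the plane by angle `θ` about the origin, the linear isometry with matrix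
`[[cos θ, −sin θ], [sin θ, cos θ]]`. -/
noncomputable def rot (θ : ℝ) (p : EuclideanSpace ℝ (Fin 2)) : EuclideanSpace ℝ (Fin 2) :=
  pt (Real.cos θ * p 0 - Real.sin θ * p 1) (Real.sin θ * p 0 + Real.cos θ * p 1)

/-- Rotation of the plane by angle `θ` about the point `s`. -/
noncomputable def rotAbout (s : EuclideanSpace ℝ (Fin 2)) (θ : ℝ)
    (p : EuclideanSpace ℝ (Fin 2)) : EuclideanSpace ℝ (Fin 2) :=
  s + rot θ (p - s)

open Real

lemma rot_rot (a b : ℝ) (p : EuclideanSpace ℝ (Fin 2)) : rot a (rot b p) = rot (a + b) p := by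
  ext i
  fin_cases i <;> simp [rot, pt, cos_add, sin_add] <;> ring

lemma rot_zero (p : EuclideanSpace ℝ (Fin 2)) : rot 0 p = p := by
  ext i
  fin_cases i <;> simp [rot, pt]

lemma iterate_rotAbout (s p : EuclideanSpace ℝ (Fin 2)) (θ : ℝ) (k : ℕ) :
    (rotAbout s θ)^[k] p = s + rot (k * θ) (p - s) := by
  induction k with
  | zero => simp [rot_zero]
  | succ n ih =>
    rw [Function.iterate_succ_apply', ih, rotAbout, add_sub_cancel_left, rot_rot]
    push_cast
    ring_nf

lemma norm_sq_eq_fin_two (w : EuclideanSpace ℝ (Fin 2)) : ‖w‖ ^ 2 = w 0 ^ 2 + w 1 ^ 2 := by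
  simp [EuclideanSpace.real_norm_sq_eq, Fin.sum_univ_two]

lemma norm_sub_rot_sq (u v : EuclideanSpace ℝ (Fin 2)) (θ : ℝ) :
    ‖u - rot θ v‖ ^ 2 = ‖u‖ ^ 2 + ‖v‖ ^ 2
      - 2 * (cos θ * (u 0 * v 0 + u 1 * v 1) + sin θ * (u 1 * v 0 - u 0 * v 1)) := by
  simp only [norm_sq_eq_fin_two, rot, pt, WithLp.equiv_symm_apply, PiLp.sub_apply,
    Matrix.cons_val_zero, Matrix.cons_val_one]
  linear_combination (v 0 ^ 2 + v 1 ^ 2) * sin_sq_add_cos_sq θ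

/-- Among the six directions `kπ/3`, some one makes an angle at most `π/6` with `(A, B)`. -/
lemma exists_hexagonal_direction (A B : ℝ) :
    ∃ k : Fin 6, 0 ≤ cos ((k : ℕ) * (π / 3)) * A + sin ((k : ℕ) * (π / 3)) * B ∧
      3 * (A ^ 2 + B ^ 2) ≤
        4 * (cos ((k : ℕ) * (π / 3)) * A + sin ((k : ℕ) * (π / 3)) * B) ^ 2 := by
  set m : ℕ → ℝ := fun k => cos (k * (π / 3)) * A + sin (k * (π / 3)) * B with hm
  have m_add_three (k : ℕ) : m (k + 3) = -m k := by
    simp only [hm, Nat.cast_add, add_mul, show ((3 : ℕ) : ℝ) * (π / 3) = π by push_cast; ring,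
      cos_add_pi, sin_add_pi]
    ring
  suffices ∃ k < 3, 3 * (A ^ 2 + B ^ 2) ≤ 4 * m k ^ 2 by
    obtain ⟨k, hk, hmk⟩ := this
    rcases le_total 0 (m k) with h | h
    · exact ⟨⟨k, by omega⟩, h, hmk⟩
    · refine ⟨⟨k + 3, by omega⟩, ?_, ?_⟩
      · change 0 ≤ m (k + 3)
        rw [m_add_three]
        linarith
      · change _ ≤ 4 * m (k + 3) ^ 2
        rw [m_add_three, neg_sq]
        exact hmk
  have h3 : √3 ^ 2 = 3 := sq_sqrt (by norm_num)
  have m0 : m 0 = A := by simp [hm]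
  have m1 : m 1 = (A + √3 * B) / 2 := by
    simp only [hm, Nat.cast_one, one_mul, cos_pi_div_three, sin_pi_div_three]
    ring
  have m2 : m 2 = (-A + √3 * B) / 2 := by
    have : ((2 : ℕ) : ℝ) * (π / 3) = π - π / 3 := by push_cast; ring
    simp only [hm, this, cos_pi_sub, sin_pi_sub, cos_pi_div_three, sin_pi_div_three]
    ring
  rcases le_total (3 * B ^ 2) (A ^ 2) with hA | hA
  · exact ⟨0, by norm_num, by rw [m0]; linarith⟩
  · have hAB : |A| ≤ √3 * |B| := by
      rw [← sq_le_sq₀ (abs_nonneg A) (by positivity), mul_pow, h3, sq_abs, sq_abs]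
      exact hA
    have hA_sq_le : A ^ 2 ≤ √3 * |A * B| := by
      rw [abs_mul, ← sq_abs A]
      nlinarith [abs_nonneg A]
    rcases le_total 0 (A * B) with h | h
    · refine ⟨1, by norm_num, ?_⟩
      rw [abs_of_nonneg h] at hA_sq_le
      rw [m1]
      nlinarith
    · refine ⟨2, by norm_num, ?_⟩
      rw [abs_of_nonpos h] at hA_sq_le
      rw [m2]
      nlinarith

theorem exists_norm_sub_rot_le {u v : EuclideanSpace ℝ (Fin 2)} (h : ‖v‖ ≤ √3 * ‖u‖) :
    ∃ k : Fin 6, ‖u - rot ((k : ℕ) * (π / 3)) v‖ ≤ ‖u‖ := by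
  obtain ⟨k, hpos, hsq⟩ :=
    exists_hexagonal_direction (u 0 * v 0 + u 1 * v 1) (u 1 * v 0 - u 0 * v 1)
  refine ⟨k, ?_⟩
  set m := cos ((k : ℕ) * (π / 3)) * (u 0 * v 0 + u 1 * v 1)
    + sin ((k : ℕ) * (π / 3)) * (u 1 * v 0 - u 0 * v 1)
  have lagrange :
      (u 0 * v 0 + u 1 * v 1) ^ 2 + (u 1 * v 0 - u 0 * v 1) ^ 2 = ‖u‖ ^ 2 * ‖v‖ ^ 2 := by
    rw [norm_sq_eq_fin_two, norm_sq_eq_fin_two]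
    ring
  have hv : ‖v‖ ^ 2 ≤ 2 * m := by
    rw [← sq_le_sq₀ (by positivity) (by positivity)]
    have hv_sq : ‖v‖ ^ 2 ≤ 3 * ‖u‖ ^ 2 := by
      calc ‖v‖ ^ 2 ≤ (√3 * ‖u‖) ^ 2 := pow_le_pow_left₀ (norm_nonneg v) h 2
        _ = 3 * ‖u‖ ^ 2 := by rw [mul_pow, sq_sqrt (by norm_num)]
    nlinarith [sq_nonneg ‖v‖]
  rw [← sq_le_sq₀ (norm_nonneg _) (norm_nonneg _), norm_sub_rot_sq]
  linarith

theorem outer_crown_single_perimeter_coverage_general (s q : EuclideanSpace ℝ (Fin 2)) (R : ℝ)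
    (hqR : ‖q - s‖ ≤ Real.sqrt 3 * R)
    (x : EuclideanSpace ℝ (Fin 2)) (hx : ‖x - s‖ = R) :
    ∃ k : Fin 6, ‖x - (rotAbout s (Real.pi / 3))^[(k : ℕ)] q‖ ≤ R := by
  obtain ⟨k, hk⟩ := exists_norm_sub_rot_le (u := x - s) (v := q - s) (hx ▸ hqR)
  refine ⟨k, ?_⟩
  rwa [iterate_rotAbout, ← sub_sub, ← hx]

/-- Six sensors of sensing radius `R` located in the circular crown between radii `R` and
`√3 R` around `s`, placed symmetrically under rotations by `π/3` about `s`, jointly cover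
every point of the sensing circle of `s` at least once: for every `x` with `‖x − s‖ = R`,
at least one of the six points `ρ^k(q)`, `k = 0, …, 5`, is within distance `R` of `x`. -/
theorem outer_crown_single_perimeter_coverage (s q : EuclideanSpace ℝ (Fin 2)) (R : ℝ)
    (hR : 0 < R) (hq : R < ‖q - s‖) (hqR : ‖q - s‖ ≤ Real.sqrt 3 * R)
    (x : EuclideanSpace ℝ (Fin 2)) (hx : ‖x - s‖ = R) :
    ∃ k : Fin 6, ‖x - (rotAbout s (Real.pi / 3))^[(k : ℕ)] q‖ ≤ R :=
  outer_crown_single_perimeter_coverage_general s q R hqR x hx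
end

section
/- Let n ∈ ℕ and let id : Fin n → ℕ. There is no infinite sequence of network states σ : ℕ → (Fin n → ℕ) such that for every t ∈ ℕ there exist indices x ≠ y with σ(t+1)(x) = σ(t)(x) − 1, σ(t+1)(y) = σ(t)(y) + 1, σ(t+1)(i) = σ(t)(i) for all i ∉ {x, y}, and the Moving Condition holding in state σ(t), i.e. either σ(t)(x) > σ(t)(y) + 1, or σ(t)(x) = σ(t)(y) + 1 and id(x) > id(y). Consequently any maximal sequence of such state changes is finite, so a stable state (one in which the Moving Condition fails for every pair of indices) is reached after finitely many steps. -/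
/-! The pair `(∑ i, s i ^ 2, ∑ i, id i * s i)` decreases lexicographically at every move:
a move with `s x > s y + 1` lowers the sum of squares, while a move with `s x = s y + 1`
merely swaps the loads of `x` and `y`, keeping the sum of squares and lowering the
`id`-weighted sum because `id x > id y`. A well-founded order admits no infinite descent. -/

open Finset

theorem sq_add_sq_lt_of_add_one_lt {a b : ℕ} (h : b + 1 < a) :
    (a - 1) ^ 2 + (b + 1) ^ 2 < a ^ 2 + b ^ 2 := by
  obtain ⟨c, rfl⟩ : ∃ c, a = c + 1 := ⟨a - 1, by omega⟩
  rw [Nat.add_sub_cancel]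
  nlinarith

section Moves

variable {ι : Type*} [Fintype ι]

theorem Fintype.sum_add_add_eq_of_eq_off_pair {M : Type*} [AddCommMonoid M] {g g' : ι → M}
    {x y : ι} (hxy : x ≠ y) (hoff : ∀ i, i ≠ x → i ≠ y → g' i = g i) :
    ∑ i, g' i + (g x + g y) = ∑ i, g i + (g' x + g' y) := by
  classical
  have hcompl : ∑ i ∈ {x, y}ᶜ, g' i = ∑ i ∈ {x, y}ᶜ, g i :=
    Finset.sum_congr rfl fun i hi => by
      simp only [mem_compl, mem_insert, mem_singleton, not_or] at hi
      exact hoff i hi.1 hi.2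
  rw [← sum_add_sum_compl {x, y} g', ← sum_add_sum_compl {x, y} g, sum_pair hxy,
    sum_pair hxy, hcompl]
  abel

def MovingCondition (idf : ι → ℕ) (s : ι → ℕ) (x y : ι) : Prop :=
  s x > s y + 1 ∨ (s x = s y + 1 ∧ idf x > idf y)

def IsMove (idf : ι → ℕ) (s s' : ι → ℕ) : Prop :=
  ∃ x y, x ≠ y ∧ s' x = s x - 1 ∧ s' y = s y + 1 ∧ (∀ i, i ≠ x → i ≠ y → s' i = s i) ∧
    MovingCondition idf s x y

def movePotential (idf : ι → ℕ) (s : ι → ℕ) : ℕ ×ₗ ℕ :=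
  toLex (∑ i, s i ^ 2, ∑ i, idf i * s i)

theorem movePotential_lt_of_isMove {idf : ι → ℕ} {s s' : ι → ℕ} (h : IsMove idf s s') :
    movePotential idf s' < movePotential idf s := by
  obtain ⟨x, y, hxy, hx, hy, hoff, hcond⟩ := h
  have hsq := Fintype.sum_add_add_eq_of_eq_off_pair (g := fun i => s i ^ 2)
    (g' := fun i => s' i ^ 2) hxy fun i hix hiy => by simp only [hoff i hix hiy]
  have hwt := Fintype.sum_add_add_eq_of_eq_off_pair (g := fun i => idf i * s i)
    (g' := fun i => idf i * s' i) hxy fun i hix hiy => by simp only [hoff i hix hiy]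
  simp only [hx, hy] at hsq hwt
  rw [movePotential, movePotential, Prod.Lex.toLex_lt_toLex]
  rcases hcond with hfar | ⟨hadj, hid⟩
  · left
    have hpair := sq_add_sq_lt_of_add_one_lt hfar
    omega
  · right
    rw [hadj, Nat.add_sub_cancel] at hsq hwt
    refine ⟨by omega, ?_⟩
    have hpair : idf x * s y + idf y * (s y + 1) < idf x * (s y + 1) + idf y * s y := by
      nlinarith
    omega

end Moves

/-- Termination of Push & Pull: there is no infinite sequence of network states in which
every step moves one sensor from some hexagon `x` to another hexagon `y ≠ x` under the
Moving Condition `(s x > s y + 1) ∨ (s x = s y + 1 ∧ id x > id y)`.  Consequently any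
maximal sequence of such state changes is finite and a stable state is reached after
finitely many steps. -/
theorem no_infinite_moving_sequence (n : ℕ) (idf : Fin n → ℕ) :
    ¬ ∃ σ : ℕ → (Fin n → ℕ), ∀ t : ℕ, ∃ x y : Fin n, x ≠ y ∧
        σ (t + 1) x = σ t x - 1 ∧
        σ (t + 1) y = σ t y + 1 ∧
        (∀ i, i ≠ x → i ≠ y → σ (t + 1) i = σ t i) ∧
        (σ t x > σ t y + 1 ∨ (σ t x = σ t y + 1 ∧ idf x > idf y)) := by
  rintro ⟨σ, hσ⟩
  exact not_strictAnti_of_wellFoundedLT (fun t => movePotential idf (σ t))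
    (strictAnti_nat_of_succ_lt fun t => movePotential_lt_of_isMove (hσ t))
end
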